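/- Fix m ≥ 1 and 1 ≤ k ≤ m, and let γ_k^{HF}: B^{HF}_m → P_k^{HF} ⊗_𝔽 _kP^{HF} be the bimodule homomorphism b ↦ b·(u*⊗u + v*⊗v). Then γ_k^{HF} shifts the filtration by one: γ_k^{HF}(ℱ_n(B^{HF}_m)) ⊆ ℱ_{n+1}(P_k^{HF} ⊗ _kP^{HF}) for all n. Moreover, the induced maps on associated graded pieces ℱ_n/ℱ_{n-1}(B^{HF}_m) → ℱ_{n+1}/ℱ_n(P_k^{HF} ⊗ _kP^{HF}) coincide with the map γ_k^{Kh}: b ↦ b·(u*⊗u + v*⊗v) from B^{Kh}_m to P_k^{Kh} ⊗_𝔽 _kP^{Kh}, under the identifications gr(B^{HF}_m) ≅ B^{Kh}_m (sending 1_{ii}, 1_{ij} to 1_{ii}, 1_{ij} and [ρ_{ij}] to x_{ij}) and the grading of P_k^{Kh} ⊗ _kP^{Kh} placing v*⊗u in degree 0, v*⊗v and u*⊗u in degree 1, and u*⊗v in degree 2 (identified with the classes of v*⊗u in ℱ_0, of v*⊗v and u*⊗u in ℱ_1/ℱ_0, and of u*⊗v in ℱ_2/ℱ_1 respectively). -/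

import Mathlib

set_option maxHeartbeats 1000000

open Matrix

noncomputable section

namespace Stmt15
abbrev 𝔽 : Type := ZMod 2

/-- `𝔽[X]/(X²)`, modeled as the dual numbers over `𝔽 = ℤ/2ℤ`. -/
abbrev D : Type := DualNumber 𝔽

/-- The element `x + y·X` of `𝔽[X]/(X²)`. -/
def dn (x y : 𝔽) : D := TrivSqZeroExt.inl x + TrivSqZeroExt.inr y

abbrev MKh (m : ℕ) : Type := Matrix (Fin (m + 1)) (Fin (m + 1)) D
abbrev MHF (m : ℕ) : Type := Matrix (Fin (m + 1)) (Fin (m + 1)) (𝔽 × 𝔽)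

/-- `B^{Kh}_m`: lower triangular `(m+1)×(m+1)` matrices over `𝔽[X]/(X²)` whose
diagonal entries lie in `{0,1}`. -/
def BKh (m : ℕ) : Set (MKh m) :=
  {M | (∀ i j, i < j → M i j = 0) ∧ (∀ i, M i i = 0 ∨ M i i = 1)}

/-- `B^{HF}_m`: lower triangular `(m+1)×(m+1)` matrices over `𝔽 × 𝔽` whose
diagonal entries lie in `{(0,0),(1,1)}`. -/
def BHF (m : ℕ) : Set (MHF m) :=
  {M | (∀ i j, i < j → M i j = 0) ∧ (∀ i, M i i = 0 ∨ M i i = 1)}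

/-- The index `k` as an element of `Fin (m+1)`. -/
def idx (m k : ℕ) : Fin (m + 1) := Fin.ofNat (m + 1) k

/-- The left action of `B^{Kh}_m` on `P_k^{Kh}`; an element `α·u* + β·v*` is
recorded by its coordinates `(α, β)` in the basis `u*, v*`.  This is the unique
bilinear extension of the action table `1_{kk}·u* = u*`, `1_{k-1,k-1}·v* = v*`,
`x_{k,k-1}·v* = u*`, all other actions of pairs of basis elements being `0`. -/
def lActKh (m k : ℕ) (b : MKh m) (p : 𝔽 × 𝔽) : 𝔽 × 𝔽 :=
  ((b (idx m k) (idx m k)).fst * p.1 + (b (idx m k) (idx m (k - 1))).snd * p.2,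
   (b (idx m (k - 1)) (idx m (k - 1))).fst * p.2)

/-- The right action of `B^{Kh}_m` on `_kP^{Kh}`; an element `γ·u + δ·v` is
recorded by its coordinates `(γ, δ)` in the basis `u, v`.  This is the unique
bilinear extension of the action table `u·1_{kk} = u`, `u·x_{k,k-1} = v`,
`v·1_{k-1,k-1} = v`, all other actions of pairs of basis elements being `0`. -/
def rActKh (m k : ℕ) (q : 𝔽 × 𝔽) (a : MKh m) : 𝔽 × 𝔽 :=
  (q.1 * (a (idx m k) (idx m k)).fst,
   q.1 * (a (idx m k) (idx m (k - 1))).snd + q.2 * (a (idx m (k - 1)) (idx m (k - 1))).fst)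

/-- The left action of `B^{HF}_m` on `P_k^{HF}` (coordinates in the basis `u*, v*`):
the bilinear extension of `1_{kk}·u* = u*`, `1_{k-1,k-1}·v* = v*`,
`ρ_{k,k-1}·v* = σ_{k,k-1}·v* = u*`, all other actions of basis elements being `0`. -/
def lActHF (m k : ℕ) (b : MHF m) (p : 𝔽 × 𝔽) : 𝔽 × 𝔽 :=
  ((b (idx m k) (idx m k)).1 * p.1
      + ((b (idx m k) (idx m (k - 1))).1 + (b (idx m k) (idx m (k - 1))).2) * p.2,
   (b (idx m (k - 1)) (idx m (k - 1))).1 * p.2)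

/-- The right action of `B^{HF}_m` on `_kP^{HF}` (coordinates in the basis `u, v`):
the bilinear extension of `u·1_{kk} = u`, `u·ρ_{k,k-1} = u·σ_{k,k-1} = v`,
`v·1_{k-1,k-1} = v`, all other actions of basis elements being `0`. -/
def rActHF (m k : ℕ) (q : 𝔽 × 𝔽) (a : MHF m) : 𝔽 × 𝔽 :=
  (q.1 * (a (idx m k) (idx m k)).1,
   q.1 * ((a (idx m k) (idx m (k - 1))).1 + (a (idx m k) (idx m (k - 1))).2)
      + q.2 * (a (idx m (k - 1)) (idx m (k - 1))).1)

/-- The tensor product `P_k ⊗ _kP`: coordinates `(w₁, w₂, w₃, w₄)` in the basis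
`u*⊗u, u*⊗v, v*⊗u, v*⊗v`. -/
abbrev T4 : Type := 𝔽 × 𝔽 × 𝔽 × 𝔽

/-- Left action of `B^{Kh}_m` on `P_k^{Kh} ⊗ _kP^{Kh}`, via `b·(p⊗q) = (b·p)⊗q`. -/
def lActKhT (m k : ℕ) (b : MKh m) (w : T4) : T4 :=
  ((b (idx m k) (idx m k)).fst * w.1 + (b (idx m k) (idx m (k - 1))).snd * w.2.2.1,
   (b (idx m k) (idx m k)).fst * w.2.1 + (b (idx m k) (idx m (k - 1))).snd * w.2.2.2,
   (b (idx m (k - 1)) (idx m (k - 1))).fst * w.2.2.1,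
   (b (idx m (k - 1)) (idx m (k - 1))).fst * w.2.2.2)

/-- Right action of `B^{Kh}_m` on `P_k^{Kh} ⊗ _kP^{Kh}`, via `(p⊗q)·b = p⊗(q·b)`. -/
def rActKhT (m k : ℕ) (w : T4) (a : MKh m) : T4 :=
  (w.1 * (a (idx m k) (idx m k)).fst,
   w.1 * (a (idx m k) (idx m (k - 1))).snd + w.2.1 * (a (idx m (k - 1)) (idx m (k - 1))).fst,
   w.2.2.1 * (a (idx m k) (idx m k)).fst,
   w.2.2.1 * (a (idx m k) (idx m (k - 1))).snd + w.2.2.2 * (a (idx m (k - 1)) (idx m (k - 1))).fst)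

/-- Left action of `B^{HF}_m` on `P_k^{HF} ⊗ _kP^{HF}`. -/
def lActHFT (m k : ℕ) (b : MHF m) (w : T4) : T4 :=
  ((b (idx m k) (idx m k)).1 * w.1
      + ((b (idx m k) (idx m (k - 1))).1 + (b (idx m k) (idx m (k - 1))).2) * w.2.2.1,
   (b (idx m k) (idx m k)).1 * w.2.1
      + ((b (idx m k) (idx m (k - 1))).1 + (b (idx m k) (idx m (k - 1))).2) * w.2.2.2,
   (b (idx m (k - 1)) (idx m (k - 1))).1 * w.2.2.1,
   (b (idx m (k - 1)) (idx m (k - 1))).1 * w.2.2.2)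

/-- Right action of `B^{HF}_m` on `P_k^{HF} ⊗ _kP^{HF}`. -/
def rActHFT (m k : ℕ) (w : T4) (a : MHF m) : T4 :=
  (w.1 * (a (idx m k) (idx m k)).1,
   w.1 * ((a (idx m k) (idx m (k - 1))).1 + (a (idx m k) (idx m (k - 1))).2)
      + w.2.1 * (a (idx m (k - 1)) (idx m (k - 1))).1,
   w.2.2.1 * (a (idx m k) (idx m k)).1,
   w.2.2.1 * ((a (idx m k) (idx m (k - 1))).1 + (a (idx m k) (idx m (k - 1))).2)
      + w.2.2.2 * (a (idx m (k - 1)) (idx m (k - 1))).1)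

/-- `γ_k^{Kh} : B^{Kh}_m → P_k^{Kh} ⊗ _kP^{Kh}`, `b ↦ b·(u*⊗u + v*⊗v)`. -/
def γKh (m k : ℕ) (b : MKh m) : T4 := lActKhT m k b (1, 0, 0, 1)

/-- `γ_k^{HF} : B^{HF}_m → P_k^{HF} ⊗ _kP^{HF}`, `b ↦ b·(u*⊗u + v*⊗v)`. -/
def γHF (m k : ℕ) (b : MHF m) : T4 := lActHFT m k b (1, 0, 0, 1)

/-- `(β_k^{Kh})_{(1|1|0)} : B^{Kh}_m ⊗ (P_k^{Kh} ⊗ _kP^{Kh}) → B^{Kh}_m`: the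
bilinear map given on pairs of basis elements by `(1_{ik}, u*⊗u) ↦ x_{ik}` (`i ≥ k+1`),
`(1_{i,k-1}, v*⊗u) ↦ 1_{ik}` (`i ≥ k`), `(x_{i,k-1}, v*⊗u) ↦ x_{ik}` (`i ≥ k+1`),
`(1_{i,k-1}, v*⊗v) ↦ x_{i,k-1}` (`i ≥ k`), all other values being `0`. -/
def βKh1 (m k : ℕ) (b : MKh m) (w : T4) : MKh m :=
  (∑ i : Fin (m + 1), if k < (i : ℕ) then
      single i (idx m k)
        (dn ((b i (idx m (k - 1))).fst * w.2.2.1)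
            ((b i (idx m k)).fst * w.1 + (b i (idx m (k - 1))).snd * w.2.2.1)) else 0)
  + single (idx m k) (idx m k) (dn ((b (idx m k) (idx m (k - 1))).fst * w.2.2.1) 0)
  + ∑ i : Fin (m + 1), if k ≤ (i : ℕ) then
      single i (idx m (k - 1)) (dn 0 ((b i (idx m (k - 1))).fst * w.2.2.2)) else 0

/-- `(β_k^{Kh})_{(0|1|1)} : (P_k^{Kh} ⊗ _kP^{Kh}) ⊗ B^{Kh}_m → B^{Kh}_m`: the
bilinear map given on pairs of basis elements by `(u*⊗u, 1_{kj}) ↦ x_{kj}` (`j ≤ k-1`),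
`(v*⊗u, 1_{kj}) ↦ 1_{k-1,j}` (`j ≤ k-1`), `(v*⊗u, x_{kj}) ↦ x_{k-1,j}` (`j ≤ k-2`),
`(v*⊗v, 1_{k-1,j}) ↦ x_{k-1,j}` (`j ≤ k-2`), all other values being `0`. -/
def βKh2 (m k : ℕ) (w : T4) (a : MKh m) : MKh m :=
  (∑ j : Fin (m + 1), if (j : ℕ) < k then
      single (idx m k) j (dn 0 (w.1 * (a (idx m k) j).fst)) else 0)
  + (∑ j : Fin (m + 1), if (j : ℕ) < k then
      single (idx m (k - 1)) j (dn (w.2.2.1 * (a (idx m k) j).fst) 0) else 0)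
  + ∑ j : Fin (m + 1), if (j : ℕ) < k - 1 then
      single (idx m (k - 1)) j
        (dn 0 (w.2.2.1 * (a (idx m k) j).snd + w.2.2.2 * (a (idx m (k - 1)) j).fst)) else 0

/-- `(β_k^{HF})_{(1|1|0)} : B^{HF}_m ⊗ (P_k^{HF} ⊗ _kP^{HF}) → B^{HF}_m`: the
bilinear map given on pairs of basis elements by `(ρ_{ik}, u*⊗u) ↦ ρ_{ik}` (`i ≥ k+1`),
`(σ_{k,k-1}, v*⊗u) ↦ 1_{kk}`, `(ρ_{i,k-1}, v*⊗u) ↦ ρ_{ik}` (`i ≥ k+1`),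
`(σ_{i,k-1}, v*⊗u) ↦ σ_{ik}` (`i ≥ k+1`), `(ρ_{i,k-1}, v*⊗v) ↦ ρ_{i,k-1}` (`i ≥ k`),
all other values being `0`. -/
def βHF1 (m k : ℕ) (b : MHF m) (w : T4) : MHF m :=
  (∑ i : Fin (m + 1), if k < (i : ℕ) then
      single i (idx m k)
        ((b i (idx m k)).1 * w.1 + (b i (idx m (k - 1))).1 * w.2.2.1,
         (b i (idx m (k - 1))).2 * w.2.2.1) else 0)
  + single (idx m k) (idx m k)
      ((b (idx m k) (idx m (k - 1))).2 * w.2.2.1, (b (idx m k) (idx m (k - 1))).2 * w.2.2.1)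
  + ∑ i : Fin (m + 1), if k ≤ (i : ℕ) then
      single i (idx m (k - 1)) ((b i (idx m (k - 1))).1 * w.2.2.2, 0) else 0

/-- `(β_k^{HF})_{(0|1|1)} : (P_k^{HF} ⊗ _kP^{HF}) ⊗ B^{HF}_m → B^{HF}_m`: the
bilinear map given on pairs of basis elements by `(u*⊗u, ρ_{kj}) ↦ ρ_{kj}` (`j ≤ k-1`),
`(v*⊗u, σ_{k,k-1}) ↦ 1_{k-1,k-1}`, `(v*⊗u, ρ_{kj}) ↦ ρ_{k-1,j}` (`j ≤ k-2`),
`(v*⊗u, σ_{kj}) ↦ σ_{k-1,j}` (`j ≤ k-2`), `(v*⊗v, ρ_{k-1,j}) ↦ ρ_{k-1,j}` (`j ≤ k-2`),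
all other values being `0`. -/
def βHF2 (m k : ℕ) (w : T4) (a : MHF m) : MHF m :=
  (∑ j : Fin (m + 1), if (j : ℕ) < k then
      single (idx m k) j (w.1 * (a (idx m k) j).1, 0) else 0)
  + single (idx m (k - 1)) (idx m (k - 1))
      (w.2.2.1 * (a (idx m k) (idx m (k - 1))).2, w.2.2.1 * (a (idx m k) (idx m (k - 1))).2)
  + ∑ j : Fin (m + 1), if (j : ℕ) < k - 1 then
      single (idx m (k - 1)) j
        (w.2.2.1 * (a (idx m k) j).1 + w.2.2.2 * (a (idx m (k - 1)) j).1,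
         w.2.2.1 * (a (idx m k) j).2) else 0

/-- The left action on the mapping cone `(P_k^{Kh} ⊗ _kP^{Kh}) ⊕ B^{Kh}_m`,
`a·(w, b) := (a·w, β₁(a,w) + a·b)`. -/
def coneLKh (m k : ℕ) (a : MKh m) (p : T4 × MKh m) : T4 × MKh m :=
  (lActKhT m k a p.1, βKh1 m k a p.1 + a * p.2)

/-- The right action on the mapping cone, `(w, b)·a := (w·a, β₂(w,a) + b·a)`. -/
def coneRKh (m k : ℕ) (p : T4 × MKh m) (a : MKh m) : T4 × MKh m :=
  (rActKhT m k p.1 a, βKh2 m k p.1 a + p.2 * a)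

def coneLHF (m k : ℕ) (a : MHF m) (p : T4 × MHF m) : T4 × MHF m :=
  (lActHFT m k a p.1, βHF1 m k a p.1 + a * p.2)

def coneRHF (m k : ℕ) (p : T4 × MHF m) (a : MHF m) : T4 × MHF m :=
  (rActHFT m k p.1 a, βHF2 m k p.1 a + p.2 * a)

/-- The degree-0 identification `ℱ₀(B^{HF}_m) ≅ (degree-0 part of B^{Kh}_m)`,
sending `1_{ii}, 1_{ij} = ρ_{ij} + σ_{ij}` to `1_{ii}, 1_{ij}`: on matrix entries,
`(c, c) ↦ c`. -/
def σ0 (m : ℕ) (M : MHF m) : MKh m := Matrix.of fun i j => dn ((M i j).1) 0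

/-- The degree-1 identification `ℱ₁/ℱ₀(B^{HF}_m) ≅ (degree-1 part of B^{Kh}_m)`,
sending the class `[ρ_{ij}]` to `x_{ij}`: on matrix entries, `(r, s) ↦ (r+s)·X`
(which kills `ℱ₀` and sends `ρ_{ij}`, and any representative of `[ρ_{ij}]`, to `x_{ij}`). -/
def σ1 (m : ℕ) (M : MHF m) : MKh m := Matrix.of fun i j => dn 0 ((M i j).1 + (M i j).2)

/-- `ℱ₀(B^{HF}_m)`: the 𝔽-span of the `1_{ii}` and the `1_{ij} = ρ_{ij} + σ_{ij}`,
i.e. lower triangular matrices all of whose entries lie in `𝔽·(1,1)`. -/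
def F0HF (m : ℕ) : Set (MHF m) :=
  {M | (∀ i j, i < j → M i j = 0) ∧ ∀ i j, (M i j).1 = (M i j).2}

/-- The filtration `ℱ_{-1} = 0 ⊆ ℱ₀ ⊆ ℱ₁ = B^{HF}_m` (with `ℱ_n = B^{HF}_m` for
`n ≥ 1` and `ℱ_n = 0` for `n ≤ -1`). -/
def FiltB (m : ℕ) : ℤ → Set (MHF m) := fun n =>
  if n < 0 then {0} else if n = 0 then F0HF m else BHF m

/-- The filtration on `P_k^{HF} ⊗ _kP^{HF}`:
`ℱ₀ = 𝔽·(v*⊗u) ⊆ ℱ₁ = span{v*⊗u, v*⊗v, u*⊗u} ⊆ ℱ₂ = everything`. -/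
def FiltT : ℤ → Set T4 := fun n =>
  if n < 0 then {0}
  else if n = 0 then {w | w.1 = 0 ∧ w.2.1 = 0 ∧ w.2.2.2 = 0}
  else if n = 1 then {w | w.2.1 = 0}
  else Set.univ

/-- The identification of `ℱ₁/ℱ₀(P_k^{HF} ⊗ _kP^{HF})` with the degree-1 part
`span{u*⊗u, v*⊗v}` of `P_k^{Kh} ⊗ _kP^{Kh}`: the class of `w` is recorded by its
`u*⊗u` and `v*⊗v` coordinates. -/
def θ1 (w : T4) : T4 := (w.1, 0, 0, w.2.2.2)

/-!
The `u*⊗u` and `v*⊗v` coordinates of `b·(u*⊗u + v*⊗v)` only read the diagonal entries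
`1_{kk}, 1_{k-1,k-1}` of `b`, and its `u*⊗v` coordinate only reads `ρ + σ` at `(k, k-1)`.
Hence `γ^{HF}(b) = γ^{Kh}(σ0 b) + γ^{Kh}(σ1 b)`. Since `σ1` kills `ℱ₀` and `γ^{Kh} ∘ σ0` has
no `u*⊗v` component, the filtration shift and both comparisons on graded pieces follow,
using `x + x = 0` over `𝔽`.
-/

section GradedPieces

variable {m k : ℕ}

lemma zero_mem_FiltT (n : ℤ) : (0 : T4) ∈ FiltT n := by
  unfold FiltT
  split_ifs <;> simp

lemma mem_FiltT_one {w : T4} : w ∈ FiltT 1 ↔ w.2.1 = 0 := by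
  simp [FiltT]

lemma FiltT_of_two_le {n : ℤ} (hn : 2 ≤ n) : FiltT n = Set.univ := by
  simp [FiltT, show ¬n < 0 by omega, show n ≠ 0 by omega, show n ≠ 1 by omega]

lemma FiltB_of_neg {n : ℤ} (hn : n < 0) : FiltB m n = {0} := by
  simp [FiltB, hn]

lemma FiltB_zero : FiltB m 0 = F0HF m := by
  simp [FiltB]

lemma γHF_zero : γHF m k 0 = 0 := by
  simp [γHF, lActHFT]

lemma γKh_zero : γKh m k 0 = 0 := by
  simp [γKh, lActKhT]

theorem γHF_eq_γKh_σ0_add_γKh_σ1 (b : MHF m) :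
    γHF m k b = γKh m k (σ0 m b) + γKh m k (σ1 m b) := by
  simp [γHF, γKh, lActHFT, lActKhT, σ0, σ1, dn]

theorem σ1_eq_zero_of_mem_F0HF {b : MHF m} (hb : b ∈ F0HF m) : σ1 m b = 0 := by
  ext i j <;> simp [σ1, dn, hb.2 i j, CharTwo.add_self_eq_zero]

theorem γKh_σ0_mem_FiltT_one (b : MHF m) : γKh m k (σ0 m b) ∈ FiltT 1 := by
  simp [mem_FiltT_one, γKh, lActKhT, σ0, dn]

theorem γHF_mem_FiltT_one_of_mem_F0HF {b : MHF m} (hb : b ∈ F0HF m) :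
    γHF m k b ∈ FiltT 1 := by
  simpa [γHF_eq_γKh_σ0_add_γKh_σ1, σ1_eq_zero_of_mem_F0HF hb, γKh_zero]
    using γKh_σ0_mem_FiltT_one (k := k) b

theorem γHF_mem_FiltT_add_one {n : ℤ} {b : MHF m} (hb : b ∈ FiltB m n) :
    γHF m k b ∈ FiltT (n + 1) := by
  rcases lt_trichotomy n 0 with hn | rfl | hn
  · rw [FiltB_of_neg hn, Set.mem_singleton_iff] at hb
    rw [hb, γHF_zero]
    exact zero_mem_FiltT _
  · rw [FiltB_zero] at hb
    exact γHF_mem_FiltT_one_of_mem_F0HF hb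
  · rw [FiltT_of_two_le (by omega)]
    trivial

theorem γHF_add_γKh_σ0_mem_FiltT_zero {b : MHF m} (hb : b ∈ F0HF m) :
    γHF m k b + γKh m k (σ0 m b) ∈ FiltT 0 := by
  rw [γHF_eq_γKh_σ0_add_γKh_σ1, σ1_eq_zero_of_mem_F0HF hb, γKh_zero, add_zero,
    CharTwo.add_self_eq_zero]
  exact zero_mem_FiltT 0

theorem γHF_add_γKh_σ1_mem_FiltT_one (b : MHF m) :
    γHF m k b + γKh m k (σ1 m b) ∈ FiltT 1 := by
  rw [γHF_eq_γKh_σ0_add_γKh_σ1, CharTwo.add_cancel_right]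
  exact γKh_σ0_mem_FiltT_one b

end GradedPieces

-- Over `𝔽` a difference is a sum: "the classes agree in `ℱ_{n+1}/ℱ_n`" is stated as
-- "the sum lies in `ℱ_n`".
theorem statement_15_general (m k : ℕ) :
    -- `γ_k^{HF}` shifts the filtration by one
    (∀ n : ℤ, ∀ b ∈ FiltB m n, γHF m k b ∈ FiltT (n + 1)) ∧
    -- coincidence on the degree-0 graded piece
    (∀ b ∈ FiltB m 0, γHF m k b + γKh m k (σ0 m b) ∈ FiltT 0) ∧
    -- coincidence on the degree-1 graded piece
    (∀ b ∈ FiltB m 1, γHF m k b + γKh m k (σ1 m b) ∈ FiltT 1) :=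
  ⟨fun _ _ hb => γHF_mem_FiltT_add_one hb,
   fun _ hb => γHF_add_γKh_σ0_mem_FiltT_zero (FiltB_zero ▸ hb),
   fun b _ => γHF_add_γKh_σ1_mem_FiltT_one b⟩

/-- The bimodule map `γ_k^{HF} : b ↦ b·(u*⊗u + v*⊗v)` shifts the
filtration by one: `γ_k^{HF}(ℱ_n(B^{HF}_m)) ⊆ ℱ_{n+1}(P_k^{HF} ⊗ _kP^{HF})`.
Moreover the induced maps on associated graded pieces coincide with
`γ_k^{Kh} : b ↦ b·(u*⊗u + v*⊗v)` under the identifications `gr(B^{HF}_m) ≅ B^{Kh}_m`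
(`1_{ii}, 1_{ij} ↦ 1_{ii}, 1_{ij}` via `σ0`, `[ρ_{ij}] ↦ x_{ij}` via `σ1`) and the
grading on `P_k^{Kh} ⊗ _kP^{Kh}` placing `v*⊗u` in degree 0, `v*⊗v`, `u*⊗u` in
degree 1 and `u*⊗v` in degree 2 (identified with the corresponding classes in
`ℱ₀`, `ℱ₁/ℱ₀`, `ℱ₂/ℱ₁` of `P_k^{HF} ⊗ _kP^{HF}`): the class of `γ_k^{HF}(b)` in
`ℱ_{n+1}/ℱ_n` agrees with `γ_k^{Kh}` of the class of `b` in `ℱ_n/ℱ_{n-1}`, i.e.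
the differences lie in the next-lower filtration level. -/
theorem statement_15 (m k : ℕ) (hm : 1 ≤ m) (hk1 : 1 ≤ k) (hk2 : k ≤ m) :
    -- `γ_k^{HF}` shifts the filtration by one
    (∀ n : ℤ, ∀ b ∈ FiltB m n, γHF m k b ∈ FiltT (n + 1)) ∧
    -- coincidence on the degree-0 graded piece
    (∀ b ∈ FiltB m 0, γHF m k b + γKh m k (σ0 m b) ∈ FiltT 0) ∧
    -- coincidence on the degree-1 graded piece
    (∀ b ∈ FiltB m 1, γHF m k b + γKh m k (σ1 m b) ∈ FiltT 1) :=
  statement_15_general m k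

end Stmt15
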